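/- arXiv:1803.07812 — 3 statements merged into one kernel-verified Lean document; each statement's English description precedes it below -/
import Mathlib

section
/- For a uniformly distributed P_b on [0, P_b^max] and exponential |h_bb|² with mean λ_bb, the outage probability δ = P[Q/(φ P_b |h_bb|² + σ_b²) ≤ 2^R − 1] equals e^{−η} + η·Ei(−η), where η = (Q − (2^R−1)σ_b²)/((2^R−1) λ_bb φ P_b^max), assuming Q > (2^R−1)σ_b². -/
/-!
Conditioned on `P_b = y`, the exponential tail gives `P[|h_bb|² ≥ a] = e^{-a/λ_bb}`, which here
is `e^{-c/y}`. Substituting `t = c/y` turns the uniform average over `y ∈ (0, P^max)` into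
`η ∫_η^∞ e^{-t}/t² dt` with `η = c/P^max`, and one integration by parts gives
`∫_η^∞ e^{-t}/t² dt = e^{-η}/η - ∫_η^∞ e^{-t}/t dt = e^{-η}/η + Ei(-η)`.
-/

open Real MeasureTheory

/-- Exponential integral Ei(x) = −∫_{−x}^∞ e^{−t}/t dt (valid for x < 0). -/
noncomputable def Ei (x : ℝ) : ℝ := -∫ t in Set.Ioi (-x), Real.exp (-t) / t

open Set Filter Topology

theorem integral_exponential_density_Ici (a : ℝ) {lam : ℝ} (hlam : 0 < lam) :
    ∫ x in Ici a, exp (-x / lam) / lam = exp (-a / lam) := by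
  have hsubst : ∫ x in Ioi a, exp (-(x / lam)) = lam * exp (-(a / lam)) := by
    simpa only [div_eq_inv_mul, integral_exp_neg_Ioi, inv_inv, smul_eq_mul] using
      integral_comp_mul_left_Ioi (fun u => exp (-u)) a (inv_pos.mpr hlam)
  rw [integral_Ici_eq_integral_Ioi, integral_div]
  simp_rw [neg_div]
  rw [hsubst]
  field_simp

theorem integrableOn_exp_neg_div_pow_Ioi {η : ℝ} (hη : 0 < η) (n : ℕ) :
    IntegrableOn (fun t => exp (-t) / t ^ n) (Ioi η) := by
  refine Integrable.mono' ((integrableOn_exp_neg_Ioi η).mul_const (η ^ n)⁻¹) ?_ ?_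
  · exact ((continuous_exp.comp continuous_neg).measurable.div
      (measurable_id.pow_const n)).aestronglyMeasurable
  · rw [ae_restrict_iff' measurableSet_Ioi]
    filter_upwards with t ht
    rw [norm_of_nonneg (by have := hη.trans ht; positivity), ← div_eq_mul_inv]
    exact div_le_div_of_nonneg_left (exp_pos _).le (pow_pos hη n) (pow_le_pow_left₀ hη.le ht.le n)

theorem integral_exp_neg_div_sq_Ioi {η : ℝ} (hη : 0 < η) :
    ∫ t in Ioi η, exp (-t) / t ^ 2 = exp (-η) / η - ∫ t in Ioi η, exp (-t) / t := by
  have hderiv : ∀ t ∈ Ioi η, HasDerivAt (fun t => -exp (-t) / t)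
      (exp (-t) / t + exp (-t) / t ^ 2) t := by
    intro t ht
    have ht0 : t ≠ 0 := (hη.trans ht).ne'
    have hnum : HasDerivAt (fun t => -exp (-t)) (exp (-t)) t :=
      (hasDerivAt_neg t).exp.neg.congr_deriv (by ring)
    have hquot : HasDerivAt (fun t => -exp (-t) / t)
        ((exp (-t) * t - -exp (-t) * 1) / t ^ 2) t := hnum.div (hasDerivAt_id t) ht0
    convert hquot using 1
    field_simp
    ring
  have hdecay : Tendsto (fun t => -exp (-t) / t) atTop (𝓝 0) := by
    have := (tendsto_exp_neg_atTop_nhds_zero.mul tendsto_inv_atTop_zero).neg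
    simpa only [mul_zero, neg_zero, ← div_eq_mul_inv, neg_div] using this
  have hint1 := integrableOn_exp_neg_div_pow_Ioi hη 1
  simp only [pow_one] at hint1
  have hint2 := integrableOn_exp_neg_div_pow_Ioi hη 2
  have hftc := integral_Ioi_of_hasDerivAt_of_tendsto (f := fun t => -exp (-t) / t)
    (((continuous_exp.comp continuous_neg).neg.continuousAt.div continuousAt_id
      hη.ne').continuousWithinAt) hderiv (hint1.add hint2) hdecay
  rw [integral_add hint1 hint2] at hftc
  simp only [zero_sub, neg_div, neg_neg] at hftc
  linarith

theorem integral_Ioo_zero_eq_integral_Ioi_comp_div {E : Type*} [NormedAddCommGroup E]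
    [NormedSpace ℝ E] {c P : ℝ} (hc : 0 < c) (hP : 0 < P) (g : ℝ → E) :
    ∫ y in Ioo 0 P, g y = ∫ t in Ioi (c / P), (c / t ^ 2) • g (c / t) := by
  have hcP : 0 < c / P := div_pos hc hP
  have himage : (fun t => c / t) '' Ioi (c / P) = Ioo 0 P := by
    ext y
    constructor
    · rintro ⟨t, ht, rfl⟩
      have ht0 : 0 < t := hcP.trans ht
      refine ⟨by positivity, ?_⟩
      calc c / t < c / (c / P) := div_lt_div_of_pos_left hc hcP ht
        _ = P := by field_simp
    · rintro ⟨hy0, hyP⟩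
      refine ⟨c / y, ?_, by field_simp⟩
      rw [mem_Ioi, div_lt_div_iff₀ hP hy0]
      exact mul_lt_mul_of_pos_left hyP hc
  rw [← himage, integral_image_eq_integral_abs_deriv_smul measurableSet_Ioi
    (f' := fun t => -c / t ^ 2) _ _ g]
  · refine setIntegral_congr_fun measurableSet_Ioi fun t ht => ?_
    have : 0 < t := hcP.trans ht
    rw [abs_div, abs_neg, abs_of_pos hc, abs_of_pos (by positivity)]
  · intro t ht
    have ht0 : t ≠ 0 := (hcP.trans ht).ne'
    have hinv : HasDerivAt (fun t => c / t) (-c / t ^ 2) t := by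
      simpa [div_eq_mul_inv, mul_comm] using (hasDerivAt_inv ht0).const_mul c
    exact hinv.hasDerivWithinAt
  · exact fun _ _ _ _ heq => inv_injective (mul_left_cancel₀ hc.ne' heq)

theorem average_exp_neg_div_eq_Ei {c P : ℝ} (hc : 0 < c) (hP : 0 < P) :
    (1 / P) * ∫ y in (0 : ℝ)..P, exp (-(c / y))
      = exp (-(c / P)) + c / P * Ei (-(c / P)) := by
  have hcP : 0 < c / P := div_pos hc hP
  have hsubst : ∫ y in (0 : ℝ)..P, exp (-(c / y))
      = c * ∫ t in Ioi (c / P), exp (-t) / t ^ 2 := by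
    rw [intervalIntegral.integral_of_le hP.le, integral_Ioc_eq_integral_Ioo,
      integral_Ioo_zero_eq_integral_Ioi_comp_div hc hP, ← integral_const_mul]
    refine setIntegral_congr_fun measurableSet_Ioi fun t ht => ?_
    have : t ≠ 0 := (hcP.trans ht).ne'
    simp only [smul_eq_mul]
    field_simp
  rw [hsubst, integral_exp_neg_div_sq_Ioi hcP, Ei, neg_neg]
  field_simp
  ring

theorem outage_probability_general (Q R σb2 lam φ Pmax : ℝ)
    (hR : 0 < R) (hlam : 0 < lam)
    (hφ0 : 0 < φ) (hP : 0 < Pmax)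
    (hcov : (2 ^ R - 1) * σb2 < Q) :
    (1 / Pmax) * ∫ y in (0:ℝ)..Pmax,
        (∫ x in Set.Ici ((Q - (2 ^ R - 1) * σb2) / ((2 ^ R - 1) * φ * y)),
          Real.exp (-x / lam) / lam)
      = Real.exp (-((Q - (2 ^ R - 1) * σb2) / ((2 ^ R - 1) * lam * φ * Pmax)))
        + ((Q - (2 ^ R - 1) * σb2) / ((2 ^ R - 1) * lam * φ * Pmax))
          * Ei (-((Q - (2 ^ R - 1) * σb2) / ((2 ^ R - 1) * lam * φ * Pmax))) := by
  have hk : 0 < (2 : ℝ) ^ R - 1 := sub_pos.mpr (one_lt_rpow one_lt_two hR)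
  set k := (2 : ℝ) ^ R - 1
  set c := (Q - k * σb2) / (k * lam * φ)
  have hc : 0 < c := div_pos (sub_pos.mpr hcov) (by positivity)
  have hinner : ∀ y, ∫ x in Ici ((Q - k * σb2) / (k * φ * y)), exp (-x / lam) / lam
      = exp (-(c / y)) := by
    intro y
    rw [integral_exponential_density_Ici _ hlam, neg_div, div_div, div_div]
    ring_nf
  have hη : (Q - k * σb2) / (k * lam * φ * Pmax) = c / Pmax := (div_div _ _ _).symm
  simp only [hinner, hη]
  exact average_exp_neg_div_eq_Ei hc hP

/-- Outage probability: with P_b ~ Uniform[0,P_b^max] and |h_bb|² ~ Exp(mean λ_bb)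
independent, δ = P[Q/(φ P_b |h_bb|² + σ_b²) ≤ 2^R − 1]
  = (1/P^max)∫₀^{P^max} P[|h_bb|² ≥ c/(φ y)] dy, c = (Q−(2^R−1)σ_b²)/((2^R−1)λ_bb φ)·λ_bb·φ,
equals e^{−η} + η·Ei(−η) with η = (Q−(2^R−1)σ_b²)/((2^R−1) λ_bb φ P_b^max). -/
theorem outage_probability (Q R σb2 lam φ Pmax : ℝ)
    (hQ : 0 < Q) (hR : 0 < R) (hσ : 0 < σb2) (hlam : 0 < lam)
    (hφ0 : 0 < φ) (hφ1 : φ ≤ 1) (hP : 0 < Pmax)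
    (hcov : (2 ^ R - 1) * σb2 < Q) :
    (1 / Pmax) * ∫ y in (0:ℝ)..Pmax,
        (∫ x in Set.Ici ((Q - (2 ^ R - 1) * σb2) / ((2 ^ R - 1) * φ * y)),
          Real.exp (-x / lam) / lam)
      = Real.exp (-((Q - (2 ^ R - 1) * σb2) / ((2 ^ R - 1) * lam * φ * Pmax)))
        + ((Q - (2 ^ R - 1) * σb2) / ((2 ^ R - 1) * lam * φ * Pmax))
          * Ei (-((Q - (2 ^ R - 1) * σb2) / ((2 ^ R - 1) * lam * φ * Pmax))) :=
  outage_probability_general Q R σb2 lam φ Pmax hR hlam hφ0 hP hcov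
end

section
/- Let α(τ) and β(τ) denote the false alarm and miss detection rates of the radiometer, with α given piecewise as in the conventional CIPC scheme and β(τ) = 1 − (Qλ_aw/(P λ_ab g))·ln(1 + Pg/(τ + Qλ_aw/λ_ab − ν)) for τ > ν, where ν = Pg + σ². Then the total error ξ(τ) = α(τ) + β(τ) attains its minimum over τ ∈ ℝ at τ* = ν, with minimum value ξ* = 1 − (Qλ_aw/(P λ_ab g))·ln(1 + P λ_ab g/(Q λ_aw)). -/
open Real Set

/-! On each of its three pieces ξ has the form `1 - a * log (1 + x)` with `a > 0` and `x` ranging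
over `[0, P g λ_ab / (Q λ_aw)]`: `x = 0` below `σ²`, `x` grows linearly up to its maximum on
`[σ², ν]`, and `x` decays back from it beyond `ν`. Since `x ↦ 1 - a log (1 + x)` is antitone,
ξ is smallest where `x` is largest, at `τ = ν`. -/

theorem antitoneOn_one_sub_mul_log_one_add {a : ℝ} (ha : 0 ≤ a) :
    AntitoneOn (fun x : ℝ => 1 - a * log (1 + x)) (Ici 0) := by
  intro x hx y _ hxy
  have hlog : log (1 + x) ≤ log (1 + y) :=
    log_le_log (by linarith [mem_Ici.mp hx]) (by linarith)
  dsimp only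
  linarith [mul_le_mul_of_nonneg_left hlog ha]

theorem mul_div_mem_Icc_of_mem_Icc {x m b c : ℝ} (hx : x ∈ Icc 0 m) (hb : 0 ≤ b)
    (hc : 0 ≤ c) : x * b / c ∈ Icc 0 (m * b / c) :=
  ⟨by have := hx.1; positivity, by have := hx.2; gcongr⟩

theorem div_add_sub_mem_Icc {p c ν τ : ℝ} (hp : 0 ≤ p) (hc : 0 < c) (hτ : ν < τ) :
    p / (τ + c - ν) ∈ Icc 0 (p / c) :=
  ⟨div_nonneg hp (by linarith), div_le_div_of_nonneg_left hp hc (by linarith)⟩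

theorem optimal_threshold_general (P g σ2 Q lam_aw lam_ab : ℝ)
    (hP : 0 < P) (hg : 0 < g) (hQ : 0 < Q)
    (haw : 0 < lam_aw) (hab : 0 < lam_ab)
    (ν : ℝ) (hν : ν = P * g + σ2) (ξ : ℝ → ℝ)
    (hξ : ∀ τ : ℝ, ξ τ =
      if τ < σ2 then 1
      else if τ ≤ ν then
        1 - (Q * lam_aw / (P * g * lam_ab)) *
          Real.log (1 + (τ - σ2) * lam_ab / (Q * lam_aw))
      else
        1 - (Q * lam_aw / (P * g * lam_ab)) *
          Real.log (1 + P * g / (τ + Q * lam_aw / lam_ab - ν))) :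
    (∀ τ : ℝ, ξ ν ≤ ξ τ) ∧
    ξ ν = 1 - (Q * lam_aw / (P * lam_ab * g)) *
      Real.log (1 + P * lam_ab * g / (Q * lam_aw)) := by
  set f := fun x : ℝ => 1 - Q * lam_aw / (P * g * lam_ab) * log (1 + x)
  set m := P * g * lam_ab / (Q * lam_aw)
  have hf : AntitoneOn f (Ici 0) := antitoneOn_one_sub_mul_log_one_add (by positivity)
  have hf_min : ∀ x ∈ Icc 0 m, f m ≤ f x := fun x hx => hf hx.1 (hx.1.trans hx.2) hx.2
  have hσν : σ2 ≤ ν := by nlinarith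
  have hξν : ξ ν = f m := by
    rw [hξ, if_neg hσν.not_gt, if_pos le_rfl, hν, add_sub_cancel_right]
  refine ⟨fun τ => ?_, by rw [hξν, mul_right_comm P lam_ab g]⟩
  rw [hξν, hξ]
  split_ifs with hlt hle
  · simpa [f] using hf_min 0 ⟨le_rfl, by positivity⟩
  · refine hf_min _ ?_
    simpa only [m, hν, add_sub_cancel_right] using
      mul_div_mem_Icc_of_mem_Icc (x := τ - σ2) ⟨by linarith, by linarith⟩ hab.le (by positivity)
  · refine hf_min _ ?_
    simpa only [m, div_div_eq_mul_div] using
      div_add_sub_mem_Icc (p := P * g) (by positivity) (by positivity : 0 < Q * lam_aw / lam_ab)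
        (not_le.mp hle)

/-- Conventional CIPC: the total error probability ξ(τ) (piecewise as derived)
is minimized over all τ at τ* = ν = P g + σ², with minimum value
ξ* = 1 − (Qλ_aw/(P λ_ab g))·ln(1 + P λ_ab g/(Q λ_aw)). -/
theorem optimal_threshold (P g σ2 Q lam_aw lam_ab : ℝ)
    (hP : 0 < P) (hg : 0 < g) (hσ : 0 < σ2) (hQ : 0 < Q)
    (haw : 0 < lam_aw) (hab : 0 < lam_ab)
    (ν : ℝ) (hν : ν = P * g + σ2) (ξ : ℝ → ℝ)
    (hξ : ∀ τ : ℝ, ξ τ =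
      if τ < σ2 then 1
      else if τ ≤ ν then
        1 - (Q * lam_aw / (P * g * lam_ab)) *
          Real.log (1 + (τ - σ2) * lam_ab / (Q * lam_aw))
      else
        1 - (Q * lam_aw / (P * g * lam_ab)) *
          Real.log (1 + P * g / (τ + Q * lam_aw / lam_ab - ν))) :
    (∀ τ : ℝ, ξ ν ≤ ξ τ) ∧
    ξ ν = 1 - (Q * lam_aw / (P * lam_ab * g)) *
      Real.log (1 + P * lam_ab * g / (Q * lam_aw)) :=
  optimal_threshold_general P g σ2 Q lam_aw lam_ab hP hg hQ haw hab ν hν ξ hξ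
end

section
/- Let X ~ Exp(mean λ_aw), Y ~ Exp(mean λ_ab), P_b ~ Uniform[0, P^max], all independent, g > 0. Then P[Q·(X/Y) + P_b·g < P^max·g] = 1 − (Qλ_aw/(P^max g λ_ab))·ln(1 + P^max g λ_ab/(Qλ_aw)). -/
/-!
Conditionally on `Y = y`, the event `X < c Y` has probability `1 - exp (-c y / a)`; integrating
against the density of `Y` gives `c b / (c b + a)`. With `c = (Pmax - p) g / Q` and `u = Pmax - p`,
averaging over `P_b` becomes the integral of `A u / (A u + a) = 1 - a / (A u + a)` over
`[0, Pmax]`, where `A = g b / Q`; the second term integrates to a logarithm.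
-/

open Real MeasureTheory

lemma integral_exp_neg_mul_Ioi_zero {k : ℝ} (hk : 0 < k) :
    ∫ y in Set.Ioi (0:ℝ), exp (-k * y) = k⁻¹ := by
  rw [integral_exp_mul_Ioi (neg_neg_of_pos hk), mul_zero, exp_zero, neg_div_neg_eq, one_div]

lemma integrableOn_exp_neg_mul_Ioi_zero {k : ℝ} (hk : 0 < k) :
    IntegrableOn (fun y => exp (-k * y)) (Set.Ioi 0) := by
  simpa only [neg_mul] using exp_neg_integrableOn_Ioi 0 hk

lemma integral_Ioi_one_sub_exp_mul_exp_div {a b c : ℝ} (ha : 0 < a) (hb : 0 < b)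
    (hc : 0 < c * b + a) :
    ∫ y in Set.Ioi (0:ℝ), (1 - exp (-(c * y) / a)) * (exp (-y / b) / b)
      = c * b / (c * b + a) := by
  have hk : 0 < (c * b + a) / (a * b) := by positivity
  have hintegrand : ∀ y : ℝ, (1 - exp (-(c * y) / a)) * (exp (-y / b) / b)
      = b⁻¹ * (exp (-b⁻¹ * y) - exp (-((c * b + a) / (a * b)) * y)) := by
    intro y
    rw [show -((c * b + a) / (a * b)) * y = -(c * y) / a + -y / b by field_simp; ring, exp_add]
    field_simp
  simp only [hintegrand]
  rw [integral_const_mul, integral_sub (integrableOn_exp_neg_mul_Ioi_zero (inv_pos.2 hb))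
    (integrableOn_exp_neg_mul_Ioi_zero hk), integral_exp_neg_mul_Ioi_zero (inv_pos.2 hb),
    integral_exp_neg_mul_Ioi_zero hk, inv_inv, inv_div, eq_div_iff hc.ne', mul_sub,
    mul_div_assoc', sub_mul, div_mul_cancel₀ _ hc.ne']
  field_simp
  ring

lemma integral_mul_div_mul_add {A a T : ℝ} (hA : 0 < A) (ha : 0 < a) (hT : 0 ≤ T) :
    ∫ u in (0:ℝ)..T, A * u / (A * u + a) = T - a / A * log (1 + A * T / a) := by
  have hpos : ∀ u ∈ Set.uIcc 0 T, 0 < A * u + a := by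
    intro u hu
    rw [Set.uIcc_of_le hT] at hu
    nlinarith [hu.1]
  have hsplit : Set.EqOn (fun u => A * u / (A * u + a)) (fun u => 1 - a * (A * u + a)⁻¹)
      (Set.uIcc 0 T) := by
    intro u hu
    have := (hpos u hu).ne'
    field_simp
    ring
  have hinv : ∫ u in (0:ℝ)..T, (A * u + a)⁻¹ = A⁻¹ * log (1 + A * T / a) := by
    rw [intervalIntegral.integral_comp_mul_add (fun x => x⁻¹) hA.ne', mul_zero, zero_add,
      integral_inv_of_pos ha (by positivity), smul_eq_mul, add_div, div_self ha.ne', add_comm]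
  have hcont : ContinuousOn (fun u => (A * u + a)⁻¹) (Set.uIcc 0 T) :=
    (by fun_prop : Continuous fun u => A * u + a).continuousOn.inv₀ fun u hu => (hpos u hu).ne'
  rw [intervalIntegral.integral_congr hsplit, intervalIntegral.integral_sub intervalIntegrable_const
    (hcont.intervalIntegrable.const_mul a), intervalIntegral.integral_const_mul, hinv,
    intervalIntegral.integral_const, sub_zero, smul_eq_mul, mul_one]
  ring

/-- X ~ Exp(mean λ_aw), Y ~ Exp(mean λ_ab), P_b ~ Uniform[0,P^max] independent, g > 0.
P[Q·(X/Y) + P_b·g < P^max·g]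
 = (1/P^max)∫₀^{P^max} P[X < ((P^max−p)g/Q)·Y] dp
 = 1 − (Qλ_aw/(P^max g λ_ab))·ln(1 + P^max g λ_ab/(Qλ_aw)). -/
theorem miss_detection_at_opt_threshold (Q g Pmax lam_aw lam_ab : ℝ)
    (hQ : 0 < Q) (hg : 0 < g) (hP : 0 < Pmax) (haw : 0 < lam_aw) (hab : 0 < lam_ab) :
    (1 / Pmax) * ∫ p in (0:ℝ)..Pmax,
        (∫ y in Set.Ioi (0:ℝ),
          (1 - Real.exp (-(((Pmax - p) * g / Q) * y) / lam_aw)) *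
            (Real.exp (-y / lam_ab) / lam_ab))
      = 1 - (Q * lam_aw / (Pmax * g * lam_ab)) *
          Real.log (1 + Pmax * g * lam_ab / (Q * lam_aw)) := by
  set A := g * lam_ab / Q with hA
  have hinner : ∀ p ∈ Set.uIcc 0 Pmax,
      ∫ y in Set.Ioi (0:ℝ), (1 - exp (-(((Pmax - p) * g / Q) * y) / lam_aw)) *
          (exp (-y / lam_ab) / lam_ab)
        = (fun u => A * u / (A * u + lam_aw)) (Pmax - p) := by
    intro p hp
    have hcb : (Pmax - p) * g / Q * lam_ab = A * (Pmax - p) := by ring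
    have hslack : 0 ≤ Pmax - p := by linarith [(Set.uIcc_of_le hP.le ▸ hp).2]
    rw [integral_Ioi_one_sub_exp_mul_exp_div haw hab (by rw [hcb]; positivity), hcb]
  rw [intervalIntegral.integral_congr hinner,
    intervalIntegral.integral_comp_sub_left (fun u => A * u / (A * u + lam_aw)), sub_self,
    sub_zero, integral_mul_div_mul_add (by positivity) haw hP.le,
    show A * Pmax / lam_aw = Pmax * g * lam_ab / (Q * lam_aw) by rw [hA]; field_simp, hA]
  field_simp
end
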